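/- Let τ, a, b ∈ ℝ with a² − b² = 1, a > 1 and τ·b > 0, and set P = [[1, τ],[0, 1]] and H = [[a, b],[b, a]] in SL(2,ℝ). Then for every natural number n, tr(H·P⁻ⁿ) = tr(H) − n·τ·b, and the greatest natural number n for which tr(H·P⁻ⁿ) ≥ 2 equals ⌊(tr H − 2)/√(tr(H·P·H⁻¹·P⁻¹) − 2)⌋, where ⌊ ⌋ is the greatest integer (floor) function. (This is the formula of Lemma 5.3 of the paper for the integer q associated with a hyperbolic–parabolic pair: q = ⌊(tr H − 2)/√(|tr([H,P]) − 2|)⌋.) -/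

import Mathlib

open Matrix
open scoped MatrixGroups

/-!
Right multiplication by the unitriangular matrix `[[1, t], [0, 1]]` changes the trace by `t`
times the lower-left entry, so each factor `P⁻¹ = [[1, -τ], [0, 1]]` lowers `tr H = 2a` by `τ b`.
Since `det H = 1`, `H P H⁻¹ = 1 + τ N` with `N` of trace zero and lower-left entry `-b²`, hence
`tr (H P H⁻¹ P⁻¹) = 2 + (τ b)²`: the square root in the formula is exactly the step `τ b`, so the
last `n` with `2a - n τ b ≥ 2` is `⌊(2a - 2) / (τ b)⌋`.
-/

namespace Matrix

variable {R : Type*} [CommRing R]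

theorem unitriangular_fin_two_pow (t : R) (n : ℕ) :
    !![1, t; 0, 1] ^ n = !![(1 : R), n * t; 0, 1] := by
  induction n with
  | zero => simp [one_fin_two]
  | succ k ih =>
    rw [pow_succ, ih, mul_fin_two]
    push_cast
    ring_nf

theorem trace_mul_unitriangular_fin_two (M : Matrix (Fin 2) (Fin 2) R) (t : R) :
    trace (M * !![1, t; 0, 1]) = trace M + t * M 1 0 := by
  rw [eta_fin_two M, mul_fin_two, trace_fin_two_of, trace_fin_two_of]
  simp only [of_apply, cons_val', cons_val_zero, cons_val_one, empty_val', cons_val_fin_one]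
  ring

namespace SpecialLinearGroup

theorem coe_inv_of_coe_eq_unitriangular {P : SL(2, R)} {t : R}
    (hP : (P : Matrix (Fin 2) (Fin 2) R) = !![1, t; 0, 1]) :
    ((P⁻¹ : SL(2, R)) : Matrix (Fin 2) (Fin 2) R) = !![1, -t; 0, 1] := by
  rw [coe_inv, hP, adjugate_fin_two_of, neg_zero]

theorem trace_commutator_unitriangular (g P : SL(2, R)) {t : R}
    (hP : (P : Matrix (Fin 2) (Fin 2) R) = !![1, t; 0, 1]) :
    trace ((g * P * g⁻¹ * P⁻¹ : SL(2, R)) : Matrix (Fin 2) (Fin 2) R) = 2 + (t * g 1 0) ^ 2 := by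
  have hdet : g 0 0 * g 1 1 - g 0 1 * g 1 0 = 1 := by rw [← det_fin_two, g.det_coe]
  rw [coe_mul, coe_mul, coe_mul, coe_inv_of_coe_eq_unitriangular hP, coe_inv, hP]
  conv_lhs => rw [eta_fin_two (g : Matrix (Fin 2) (Fin 2) R), adjugate_fin_two_of]
  simp only [mul_fin_two, trace_fin_two_of]
  linear_combination 2 * hdet

end SpecialLinearGroup

end Matrix

theorem Nat.isGreatest_floor {α : Type*} [Semiring α] [LinearOrder α] [IsStrictOrderedRing α]
    [FloorSemiring α] {x : α} (hx : 0 ≤ x) : IsGreatest {n : ℕ | (n : α) ≤ x} ⌊x⌋₊ :=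
  ⟨Nat.floor_le hx, fun _ hn => Nat.le_floor hn⟩

theorem stmt8_general (τ a b : ℝ) (ha : 1 < a) (hτb : 0 < τ * b)
    (P H : SL(2, ℝ))
    (hP : (P : Matrix (Fin 2) (Fin 2) ℝ) = !![1, τ; 0, 1])
    (hH : (H : Matrix (Fin 2) (Fin 2) ℝ) = !![a, b; b, a]) :
    (∀ n : ℕ, Matrix.trace ((H * P⁻¹ ^ n : SL(2, ℝ)) : Matrix (Fin 2) (Fin 2) ℝ)
        = Matrix.trace (H : Matrix (Fin 2) (Fin 2) ℝ) - n * (τ * b)) ∧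
    ∃ n₀ : ℕ,
      IsGreatest {n : ℕ |
          2 ≤ Matrix.trace ((H * P⁻¹ ^ n : SL(2, ℝ)) : Matrix (Fin 2) (Fin 2) ℝ)} n₀ ∧
      (n₀ : ℤ) = ⌊(Matrix.trace (H : Matrix (Fin 2) (Fin 2) ℝ) - 2) /
          Real.sqrt (Matrix.trace ((H * P * H⁻¹ * P⁻¹ : SL(2, ℝ)) : Matrix (Fin 2) (Fin 2) ℝ)
            - 2)⌋ := by
  have trace_H : trace (H : Matrix (Fin 2) (Fin 2) ℝ) = 2 * a := by
    rw [hH, trace_fin_two_of, two_mul]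
  have trace_H_mul : ∀ n : ℕ, trace ((H * P⁻¹ ^ n : SL(2, ℝ)) : Matrix (Fin 2) (Fin 2) ℝ)
      = trace (H : Matrix (Fin 2) (Fin 2) ℝ) - n * (τ * b) := by
    intro n
    rw [Matrix.SpecialLinearGroup.coe_mul, Matrix.SpecialLinearGroup.coe_pow,
      Matrix.SpecialLinearGroup.coe_inv_of_coe_eq_unitriangular hP, unitriangular_fin_two_pow,
      trace_mul_unitriangular_fin_two, hH]
    simp only [of_apply, cons_val_one, cons_val_zero, cons_val_fin_one]
    ring
  have sqrt_trace_commutator : √(trace ((H * P * H⁻¹ * P⁻¹ : SL(2, ℝ)) :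
      Matrix (Fin 2) (Fin 2) ℝ) - 2) = τ * b := by
    rw [Matrix.SpecialLinearGroup.trace_commutator_unitriangular H P hP, hH, add_sub_cancel_left]
    exact Real.sqrt_sq hτb.le
  have hx : 0 ≤ (2 * a - 2) / (τ * b) := div_nonneg (by linarith) hτb.le
  refine ⟨trace_H_mul, ⌊(2 * a - 2) / (τ * b)⌋₊, ?_, ?_⟩
  · convert Nat.isGreatest_floor hx using 3 with n
    rw [trace_H_mul, trace_H, le_div_iff₀ hτb]
    constructor <;> intro <;> linarith
  · rw [trace_H, sqrt_trace_commutator, Int.natCast_floor_eq_floor hx]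

/-- For the normalized hyperbolic–parabolic pair `H = [[a,b],[b,a]]`, `P = [[1,τ],[0,1]]` in
`SL(2,ℝ)` with `a² − b² = 1`, `a > 1` and `τ·b > 0`: for every `n`,
`tr(H·P⁻ⁿ) = tr H − n·τ·b`, and the greatest natural number `n` with `tr(H·P⁻ⁿ) ≥ 2` equals
`⌊(tr H − 2) / √(tr(H·P·H⁻¹·P⁻¹) − 2)⌋`. -/
theorem stmt8 (τ a b : ℝ) (h : a ^ 2 - b ^ 2 = 1) (ha : 1 < a) (hτb : 0 < τ * b)
    (P H : SL(2, ℝ))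
    (hP : (P : Matrix (Fin 2) (Fin 2) ℝ) = !![1, τ; 0, 1])
    (hH : (H : Matrix (Fin 2) (Fin 2) ℝ) = !![a, b; b, a]) :
    (∀ n : ℕ, Matrix.trace ((H * P⁻¹ ^ n : SL(2, ℝ)) : Matrix (Fin 2) (Fin 2) ℝ)
        = Matrix.trace (H : Matrix (Fin 2) (Fin 2) ℝ) - n * (τ * b)) ∧
    ∃ n₀ : ℕ,
      IsGreatest {n : ℕ |
          2 ≤ Matrix.trace ((H * P⁻¹ ^ n : SL(2, ℝ)) : Matrix (Fin 2) (Fin 2) ℝ)} n₀ ∧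
      (n₀ : ℤ) = ⌊(Matrix.trace (H : Matrix (Fin 2) (Fin 2) ℝ) - 2) /
          Real.sqrt (Matrix.trace ((H * P * H⁻¹ * P⁻¹ : SL(2, ℝ)) : Matrix (Fin 2) (Fin 2) ℝ)
            - 2)⌋ :=
  stmt8_general τ a b ha hτb P H hP hH
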